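/- The Lovász theta number of the Möbius ladder graph $Ci_{4N}(1, 2N)$ (the circulant graph on $4N$ vertices with connection set $\{1, 2N\}$) equals $N(1 + \cos(\pi/(2N)))$ for every integer $N \geq 2$. -/

import Mathlib

/-!
Circulant matrices on `ℤ/4Nℤ` are diagonalised by the characters `i ↦ cos (2πki/4N)`,
`i ↦ sin (2πki/4N)`. Write `c = cos (π/2N)` and `θ = N (1 + c)`.

Upper bound, by weak duality: the circulant `B = I + (S + S⁻¹)/(1+c) + (1-c)/(1+c) · P`, with `S`
the cyclic shift and `P` the antipodal map, is supported on the diagonal and the edges. Its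
eigenvalue on frequency `k` is `((1+c) + 2 cos (kπ/2N) + (1-c)(-1)^k)/(1+c)`: this is `4N/θ` at
`k = 0`, and nonnegative otherwise because for odd `k` the angle `kπ/2N` is at least `π/2N` away
from `π`. Hence `B - J/θ ⪰ 0`, and pairing a feasible `X` with `[[θ, -𝟙ᵀ], [-𝟙, B]]` gives
`∑ Xᵢᵢ ≤ θ`.

Lower bound: border the block `((1+c)/4)² J + (1-c²)/16 · C_{2N} + (1+c)/8 · C_{2N-1}`, where
`C_k = (cos (2πk(i-j)/4N))ᵢⱼ`, by the constant row `(1+c)/4`. It is positive semidefinite by a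
Schur complement, vanishes on the edges (differences `±1`, `2N`) and has diagonal `(1+c)/4`,
hence value `θ`.
-/

open Real Finset Matrix

theorem Matrix.PosSemidef.sum_apply_mul_apply_nonneg {ι : Type*} [Fintype ι]
    {A B : Matrix ι ι ℝ} (hA : A.PosSemidef) (hB : B.PosSemidef) :
    0 ≤ ∑ i, ∑ j, A i j * B i j := by
  simpa [dotProduct, mulVec, hadamard] using (hA.hadamard hB).dotProduct_mulVec_nonneg 1

theorem Matrix.posSemidef_cos_sub {ι : Type*} [Fintype ι] (x : ι → ℝ) :
    (of fun i j => cos (x i - x j)).PosSemidef := by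
  have h : (of fun i j => cos (x i - x j)) =
      vecMulVec (cos ∘ x) (star (cos ∘ x)) + vecMulVec (sin ∘ x) (star (sin ∘ x)) := by
    ext i j
    simp [vecMulVec_apply, cos_sub]
  rw [h]
  exact (posSemidef_vecMulVec_self_star _).add (posSemidef_vecMulVec_self_star _)

theorem sum_diag_le_of_dual_certificate {V : Type*} [Fintype V]
    {X : Matrix (Fin 1 ⊕ V) (Fin 1 ⊕ V) ℝ} (hX : X.PosSemidef)
    (h00 : X (.inl 0) (.inl 0) = 1) (hdiag : ∀ i, X (.inr i) (.inr i) = X (.inl 0) (.inr i))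
    {B : Matrix V V ℝ} {t : ℝ} (ht : 0 < t) (hB : (B - t⁻¹ • of fun _ _ => 1).PosSemidef)
    (hBdiag : ∀ i, B i i = 1) (hBX : ∀ i j, i ≠ j → B i j * X (.inr i) (.inr j) = 0) :
    ∑ i, X (.inr i) (.inr i) ≤ t := by
  set D := ∑ i, X (.inr i) (.inr i)
  set T := ∑ i, ∑ j, X (.inr i) (.inr j)
  have hsymm : ∀ i, X (.inr i) (.inl 0) = X (.inl 0) (.inr i) := fun i => by
    simpa using hX.isHermitian.apply (.inl 0) (.inr i)
  -- The dual matrix `[[t, -𝟙ᵀ], [-𝟙, B]]` is `t⁻¹ v vᵀ + (0 ⊕ (B - t⁻¹ J))` with `v = (t, -𝟙)`;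
  -- pair `X` with each summand.
  have hv : 0 ≤ t ^ 2 - 2 * t * D + T := by
    have h := hX.dotProduct_mulVec_nonneg (Sum.elim (fun _ => t) fun _ => -1)
    simp only [dotProduct, mulVec, Fintype.sum_sum_type, Fin.sum_univ_one] at h
    simp only [hsymm, ← hdiag, h00, Pi.star_apply, Sum.elim_inl, Sum.elim_inr, star_trivial,
      one_mul, mul_one, mul_neg, neg_mul, sum_neg_distrib, sum_add_distrib, ← sum_mul] at h
    linear_combination h
  have hBY : T ≤ t * D := by
    have h := hB.sum_apply_mul_apply_nonneg (hX.submatrix Sum.inr)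
    have hdiagB : ∀ i, ∑ j, B i j * X (.inr i) (.inr j) = X (.inr i) (.inr i) := fun i => by
      rw [sum_eq_single i (fun j _ hji => hBX i j hji.symm) (by simp), hBdiag, one_mul]
    simp only [Matrix.sub_apply, Matrix.smul_apply, of_apply, smul_eq_mul, mul_one,
      submatrix_apply, sub_mul, sum_sub_distrib, hdiagB, ← mul_sum, sub_nonneg] at h
    rwa [inv_mul_le_iff₀ ht] at h
  nlinarith

theorem neg_cos_le_cos_of_le_abs_sub_pi {x φ : ℝ} (hφ : 0 ≤ φ) (hx₀ : 0 ≤ x) (hx : x ≤ 2 * π)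
    (hφx : φ ≤ |x - π|) : -cos φ ≤ cos x := by
  have hle : cos |x - π| ≤ cos φ :=
    cos_le_cos_of_nonneg_of_le_pi hφ (abs_le.mpr ⟨by linarith, by linarith⟩) hφx
  rw [cos_abs, cos_sub_pi] at hle
  linarith

/-- The real part of the additive character `a ↦ exp (2πia/n)` of `ℤ/nℤ`. -/
noncomputable def cosChar (n : ℕ) (a : ℤ) : ℝ := cos (2 * π * a / n)

theorem cosChar_zero (n : ℕ) : cosChar n 0 = 1 := by simp [cosChar]

theorem cosChar_neg (n : ℕ) (a : ℤ) : cosChar n (-a) = cosChar n a := by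
  simp [cosChar, neg_div, cos_neg]

theorem cosChar_eq_of_dvd_sub {n : ℕ} {a b : ℤ} (h : (n : ℤ) ∣ a - b) :
    cosChar n a = cosChar n b := by
  obtain ⟨t, ht⟩ := h
  rcases eq_or_ne n 0 with rfl | hn
  · simp [cosChar]
  · have ha : (a : ℝ) = b + n * t := by exact_mod_cast (by linarith : a = b + n * t)
    have : 2 * π * a / n = 2 * π * b / n + t * (2 * π) := by rw [ha]; field_simp
    rw [cosChar, this, cos_add_int_mul_two_pi, cosChar]

theorem cosChar_mul_eq_of_dvd_sub {n : ℕ} {m m' : ℤ} (h : (n : ℤ) ∣ m - m') (k : ℤ) :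
    cosChar n (k * m) = cosChar n (k * m') :=
  cosChar_eq_of_dvd_sub (by rw [← mul_sub]; exact h.mul_left k)

theorem cosChar_mul_cosChar (n : ℕ) (a b : ℤ) :
    cosChar n a * cosChar n b = (cosChar n (a + b) + cosChar n (a - b)) / 2 := by
  simp only [cosChar, Int.cast_add, Int.cast_sub, mul_add, mul_sub, add_div, sub_div, cos_add,
    cos_sub]
  ring

theorem sum_range_cosChar_mul (n : ℕ) (m : ℤ) :
    ∑ k ∈ range n, cosChar n (k * m) = if (n : ℤ) ∣ m then (n : ℝ) else 0 := by
  split_ifs with hm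
  · have h1 : ∀ k : ℕ, cosChar n (k * m) = 1 := fun k => by
      rw [cosChar_eq_of_dvd_sub (b := 0) (by simpa using hm.mul_left k), cosChar_zero]
    simp [h1]
  rcases eq_or_ne n 0 with rfl | hn
  · simp
  -- the real part of a geometric sum over the `n`-th root of unity `z ≠ 1`
  set z : ℂ := Complex.exp (2 * π * m / n * Complex.I)
  have hpow : ∀ k : ℕ, cosChar n (k * m) = (z ^ k).re := fun k => by
    rw [← Complex.exp_nat_mul, cosChar, ← Complex.exp_ofReal_mul_I_re]
    push_cast
    ring_nf
  have hz1 : z ≠ 1 := by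
    rw [Ne, Complex.exp_eq_one_iff]
    rintro ⟨t, ht⟩
    field_simp at ht
    exact hm ⟨t, by exact_mod_cast ht⟩
  have hzn : z ^ n = 1 := by
    rw [← Complex.exp_nat_mul, Complex.exp_eq_one_iff]
    exact ⟨m, by field_simp⟩
  simp only [hpow, ← Complex.re_sum, geom_sum_eq hz1, hzn, sub_self, zero_div, Complex.zero_re]

theorem sum_range_cosChar_mul_cosChar (n : ℕ) (d m : ℤ) :
    ∑ k ∈ range n, cosChar n (k * d) * cosChar n (k * m) =
      ((if (n : ℤ) ∣ m + d then (n : ℝ) else 0) + if (n : ℤ) ∣ m - d then (n : ℝ) else 0) / 2 := by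
  have h : ∀ k : ℕ, cosChar n (k * d) * cosChar n (k * m) =
      (cosChar n (k * (m + d)) + cosChar n (k * (m - d))) / 2 := fun k => by
    rw [mul_comm, cosChar_mul_cosChar, mul_add, mul_sub]
  simp only [h, ← sum_div, sum_add_distrib, sum_range_cosChar_mul]

noncomputable def cosMatrix (n : ℕ) (k : ℤ) : Matrix (Fin n) (Fin n) ℝ :=
  of fun i j => cosChar n (k * ((i : ℤ) - j))

theorem posSemidef_cosMatrix (n : ℕ) (k : ℤ) : (cosMatrix n k).PosSemidef := by
  convert posSemidef_cos_sub (fun i : Fin n => 2 * π * k * i / n) using 1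
  ext i j
  simp only [cosMatrix, cosChar, of_apply]
  push_cast
  ring_nf

theorem cosMatrix_zero (n : ℕ) : cosMatrix n 0 = of fun _ _ => 1 := by
  ext i j
  simp [cosMatrix, cosChar_zero]

theorem Fin.add_mod_eq_iff_dvd {n : ℕ} (i j : Fin n) (d : ℕ) :
    ((i : ℕ) + d) % n = j ↔ (n : ℤ) ∣ (i : ℤ) - j + d := by
  rw [show (i - j + d : ℤ) = -((j : ℕ) - ((i + d : ℕ) : ℤ)) by push_cast; ring, dvd_neg,
    ← Nat.modEq_iff_dvd, Nat.ModEq, Nat.mod_eq_of_lt j.isLt, eq_comm]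

theorem Fin.eq_iff_dvd_sub {n : ℕ} (i j : Fin n) : i = j ↔ (n : ℤ) ∣ (i : ℤ) - j := by
  simpa [Nat.mod_eq_of_lt i.isLt, Fin.ext_iff] using Fin.add_mod_eq_iff_dvd i j 0

namespace MobiusLadder

variable {N : ℕ}

variable (N) in
def Adj (i j : Fin (4 * N)) : Prop :=
  (i.val + 1) % (4 * N) = j.val ∨ (j.val + 1) % (4 * N) = i.val ∨
    (i.val + 2 * N) % (4 * N) = j.val

theorem adj_iff {i j : Fin (4 * N)} :
    Adj N i j ↔ (4 * N : ℤ) ∣ (i : ℤ) - j + 1 ∨ (4 * N : ℤ) ∣ (i : ℤ) - j - 1 ∨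
      (4 * N : ℤ) ∣ (i : ℤ) - j + 2 * N := by
  simp only [Adj, Fin.add_mod_eq_iff_dvd]
  push_cast
  rw [show (j : ℤ) - i + 1 = -((i : ℤ) - j - 1) by ring, dvd_neg]

theorem not_adj_self (hN : 0 < N) (i : Fin (4 * N)) : ¬Adj N i i := by
  have h4 : (0 : ℤ) < 4 * N := by positivity
  simp only [adj_iff, sub_self, zero_add, zero_sub, dvd_neg, not_or]
  refine ⟨?_, ?_, ?_⟩ <;> intro h <;> have := Int.le_of_dvd (by positivity) h <;> omega

variable (N) in
noncomputable def cosStep : ℝ := cos (π / (2 * N))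

theorem cosStep_nonneg (hN : 0 < N) : 0 ≤ cosStep N := by
  have hφ : 0 ≤ π / (2 * N) := by positivity
  refine cos_nonneg_of_neg_pi_div_two_le_of_le (by linarith [pi_pos]) ?_
  gcongr
  norm_cast
  omega

theorem cosChar_two_mul (hN : 0 < N) : cosChar (4 * N) (2 * N) = -1 := by
  rw [cosChar, show 2 * π * ((2 * N : ℤ) : ℝ) / ((4 * N : ℕ) : ℝ) = π by
    push_cast; field_simp; ring, cos_pi]

theorem cosChar_two_mul_sub_one (hN : 0 < N) : cosChar (4 * N) (2 * N - 1) = -cosStep N := by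
  rw [cosChar, cosStep, show 2 * π * ((2 * N - 1 : ℤ) : ℝ) / ((4 * N : ℕ) : ℝ) = π - π / (2 * N) by
    push_cast; field_simp; ring, cos_pi_sub]

theorem cosChar_eq_cos (k : ℕ) : cosChar (4 * N) k = cos (k * (π / (2 * N))) := by
  rw [cosChar]
  congr 1
  push_cast
  ring

theorem cosChar_mul_two_mul (hN : 0 < N) (k : ℕ) :
    cosChar (4 * N) (k * (2 * N)) = (-1) ^ k := by
  rw [cosChar, ← cos_nat_mul_pi]
  congr 1
  push_cast
  field_simp
  ring

variable (N) in
/-- The inner block is supported on the frequencies `0`, `2N` and `2N - 1`, the last two being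
exactly those where `weight` vanishes (complementary slackness). -/
noncomputable def primal : Matrix (Fin 1 ⊕ Fin (4 * N)) (Fin 1 ⊕ Fin (4 * N)) ℝ :=
  fromBlocks 1 (of fun _ _ => (1 + cosStep N) / 4) (of fun _ _ => (1 + cosStep N) / 4)
    (((1 + cosStep N) / 4) ^ 2 • (of fun _ _ => 1)
      + ((1 - cosStep N ^ 2) / 16) • cosMatrix (4 * N) (2 * N)
      + ((1 + cosStep N) / 8) • cosMatrix (4 * N) (2 * N - 1))

theorem posSemidef_primal (hN : 0 < N) : (primal N).PosSemidef := by
  have hc := cosStep_nonneg hN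
  have hc1 : cosStep N ≤ 1 := cos_le_one _
  have hB : (of fun (_ : Fin (4 * N)) (_ : Fin 1) => (1 + cosStep N) / 4) =
      (of fun (_ : Fin 1) (_ : Fin (4 * N)) => (1 + cosStep N) / 4)ᴴ := by
    ext
    simp
  have : Invertible (1 : Matrix (Fin 1) (Fin 1) ℝ) := invertibleOne
  rw [primal, hB, PosDef.fromBlocks₁₁ _ _ PosDef.one, inv_one, Matrix.mul_one]
  refine Eq.subst (motive := PosSemidef) ?_ <|
    ((posSemidef_cosMatrix (4 * N) (2 * N)).smul (a := (1 - cosStep N ^ 2) / 16)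
      (by nlinarith)).add
    ((posSemidef_cosMatrix (4 * N) (2 * N - 1)).smul (a := (1 + cosStep N) / 8) (by linarith))
  ext i j
  simp only [Matrix.add_apply, Matrix.sub_apply, Matrix.smul_apply, smul_eq_mul, of_apply,
    conjTranspose_eq_transpose_of_trivial, transpose_apply, mul_apply, univ_unique, sum_singleton,
    mul_one]
  ring

theorem primal_inr_inr (i j : Fin (4 * N)) : primal N (.inr i) (.inr j) =
    ((1 + cosStep N) / 4) ^ 2
      + (1 - cosStep N ^ 2) / 16 * cosChar (4 * N) (2 * N * ((i : ℤ) - j))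
      + (1 + cosStep N) / 8 * cosChar (4 * N) ((2 * N - 1) * ((i : ℤ) - j)) := by
  simp [primal, cosMatrix]

theorem primal_inl_inr (i : Fin (4 * N)) : primal N (.inl 0) (.inr i) = (1 + cosStep N) / 4 := by
  simp [primal]

theorem primal_inr_self (i : Fin (4 * N)) : primal N (.inr i) (.inr i) = (1 + cosStep N) / 4 := by
  rw [primal_inr_inr, sub_self, mul_zero, mul_zero, cosChar_zero]
  ring

theorem sum_primal_inr_self : ∑ i, primal N (.inr i) (.inr i) = N * (1 + cosStep N) := by
  simp only [primal_inr_self, sum_const, card_univ, Fintype.card_fin, nsmul_eq_mul]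
  push_cast
  ring

theorem primal_eq_zero_of_adj (hN : 0 < N) {i j : Fin (4 * N)} (h : Adj N i j) :
    primal N (.inr i) (.inr j) = 0 := by
  have h2N := cosChar_two_mul hN
  have h2N1 := cosChar_two_mul_sub_one hN
  rw [primal_inr_inr]
  rcases adj_iff.mp h with h | h | h
  · have h1 (k : ℤ) : cosChar (4 * N) (k * ((i : ℤ) - j)) = cosChar (4 * N) k := by
      rw [cosChar_mul_eq_of_dvd_sub (m' := -1) (by rwa [sub_neg_eq_add]), mul_neg_one,
        cosChar_neg]
    rw [h1, h1, h2N, h2N1]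
    ring
  · have h1 (k : ℤ) : cosChar (4 * N) (k * ((i : ℤ) - j)) = cosChar (4 * N) k := by
      rw [cosChar_mul_eq_of_dvd_sub h, mul_one]
    rw [h1, h1, h2N, h2N1]
    ring
  · have h1 (k : ℤ) : cosChar (4 * N) (k * ((i : ℤ) - j)) = cosChar (4 * N) (k * -(2 * N)) :=
      cosChar_mul_eq_of_dvd_sub (by rwa [sub_neg_eq_add]) k
    have h2 : cosChar (4 * N) (2 * N * -(2 * N)) = 1 := by
      rw [cosChar_eq_of_dvd_sub (b := 0) ⟨-N, by push_cast; ring⟩, cosChar_zero]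
    have h3 : cosChar (4 * N) ((2 * N - 1) * -(2 * N)) = -1 := by
      rw [cosChar_eq_of_dvd_sub (b := 2 * N) ⟨-N, by push_cast; ring⟩, h2N]
    rw [h1, h1, h2, h3]
    ring

variable (N) in
/-- `1 + cosStep N` times the eigenvalue on frequency `k` of the dual certificate
`I + (S + S⁻¹)/(1 + c) + (1 - c)/(1 + c) · P` (`S` the cyclic shift, `P` the antipodal map). -/
noncomputable def weight (k : ℕ) : ℝ :=
  (1 + cosStep N) + 2 * cosChar (4 * N) k + (1 - cosStep N) * cosChar (4 * N) (k * (2 * N))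

theorem weight_zero : weight N 0 = 4 := by
  simp only [weight, Nat.cast_zero, zero_mul, cosChar_zero]
  ring

theorem weight_nonneg (hN : 0 < N) {k : ℕ} (hk : k < 4 * N) : 0 ≤ weight N k := by
  rw [weight, cosChar_mul_two_mul hN, cosChar_eq_cos]
  rcases Nat.even_or_odd k with hk2 | hk2
  · rw [hk2.neg_one_pow]
    nlinarith [neg_one_le_cos (k * (π / (2 * N)))]
  set φ := π / (2 * N)
  have hφ : 0 < φ := by positivity
  have hπ : π = 2 * N * φ := by simp only [φ]; field_simp
  have hk' : (k : ℝ) < 4 * N := by exact_mod_cast hk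
  have hfar : φ ≤ |k * φ - π| := by
    rw [hπ, le_abs]
    obtain ⟨t, rfl⟩ := hk2
    rcases Nat.lt_or_ge t N with ht | ht
    · right
      have : (2 * t + 1 + 1 : ℝ) ≤ 2 * N := by exact_mod_cast (by omega : 2 * t + 1 + 1 ≤ 2 * N)
      push_cast
      nlinarith
    · left
      have : (2 * N + 1 : ℝ) ≤ 2 * t + 1 := by exact_mod_cast (by omega : 2 * N + 1 ≤ 2 * t + 1)
      push_cast
      nlinarith
  have := neg_cos_le_cos_of_le_abs_sub_pi hφ.le (by positivity) (by nlinarith) hfar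
  rw [hk2.neg_one_pow, cosStep]
  linarith

variable (N) in
noncomputable def dual : Matrix (Fin (4 * N)) (Fin (4 * N)) ℝ :=
  ∑ k ∈ range (4 * N), (weight N k / (4 * N * (1 + cosStep N))) • cosMatrix (4 * N) k

theorem posSemidef_dual_sub (hN : 0 < N) :
    (dual N - (N * (1 + cosStep N))⁻¹ • of fun _ _ => (1 : ℝ)).PosSemidef := by
  have hc := cosStep_nonneg hN
  have h0 : (weight N 0 / (4 * N * (1 + cosStep N))) • cosMatrix (4 * N) ((0 : ℕ) : ℤ) =
      (N * (1 + cosStep N))⁻¹ • of fun _ _ => (1 : ℝ) := by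
    rw [weight_zero, Nat.cast_zero, cosMatrix_zero]
    congr 1
    field_simp
  rw [dual, ← add_sum_erase _ _ (mem_range.mpr (by omega : 0 < 4 * N)), h0, add_sub_cancel_left]
  exact posSemidef_sum _ fun k hk => (posSemidef_cosMatrix _ _).smul <|
    div_nonneg (weight_nonneg hN (mem_range.mp (mem_of_mem_erase hk))) (by positivity)

theorem sum_weight_mul_cosChar (m : ℤ) :
    ∑ k ∈ range (4 * N), weight N k * cosChar (4 * N) (k * m) =
      (1 + cosStep N) * (if ((4 * N : ℕ) : ℤ) ∣ m then ((4 * N : ℕ) : ℝ) else 0)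
      + ((if ((4 * N : ℕ) : ℤ) ∣ m + 1 then ((4 * N : ℕ) : ℝ) else 0)
        + if ((4 * N : ℕ) : ℤ) ∣ m - 1 then ((4 * N : ℕ) : ℝ) else 0)
      + (1 - cosStep N) * ((if ((4 * N : ℕ) : ℤ) ∣ m + 2 * N then ((4 * N : ℕ) : ℝ) else 0)
        + if ((4 * N : ℕ) : ℤ) ∣ m - 2 * N then ((4 * N : ℕ) : ℝ) else 0) / 2 := by
  have h1 := sum_range_cosChar_mul_cosChar (4 * N) 1 m
  have h2 := sum_range_cosChar_mul_cosChar (4 * N) (2 * N) m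
  simp only [mul_one] at h1
  simp only [weight, add_mul, mul_assoc, sum_add_distrib, ← mul_sum, sum_range_cosChar_mul, h1, h2]
  ring

theorem dual_apply_of_not_adj (hN : 0 < N) {i j : Fin (4 * N)} (h : ¬Adj N i j) :
    dual N i j = if i = j then 1 else 0 := by
  have hc := cosStep_nonneg hN
  have hentry : dual N i j = (∑ k ∈ range (4 * N),
      weight N k * cosChar (4 * N) (k * ((i : ℤ) - j))) / (4 * N * (1 + cosStep N)) := by
    simp [dual, Matrix.sum_apply, cosMatrix, sum_div, div_mul_eq_mul_div]
  obtain ⟨h1, h2, h3⟩ : ¬(4 * N : ℤ) ∣ (i : ℤ) - j + 1 ∧ ¬(4 * N : ℤ) ∣ (i : ℤ) - j - 1 ∧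
      ¬(4 * N : ℤ) ∣ (i : ℤ) - j + 2 * N := by
    simpa only [adj_iff, not_or] using h
  have h4 : ¬(4 * N : ℤ) ∣ (i : ℤ) - j - 2 * N := fun h4 =>
    h3 (by simpa [show (i : ℤ) - j - 2 * N + 4 * N = i - j + 2 * N by ring]
      using h4.add (dvd_refl _))
  rw [hentry, sum_weight_mul_cosChar]
  simp only [← Fin.eq_iff_dvd_sub]
  push_cast
  simp only [if_neg h1, if_neg h2, if_neg h3, if_neg h4, add_zero, mul_zero, zero_div]
  split_ifs
  · field_simp
  · simp

end MobiusLadder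

/-- The Lovász theta number of the Möbius ladder graph `Ci_{4N}(1, 2N)` equals
`N (1 + cos(π/(2N)))`: this value is the greatest value of the Lovász theta SDP. -/
theorem lovasz_theta_mobius_ladder (N : ℕ) (hN : 2 ≤ N) :
    -- adjacency in the circulant graph Ci_{4N}(1, 2N)
    let Adj : Fin (4 * N) → Fin (4 * N) → Prop := fun i j =>
      (i.val + 1) % (4 * N) = j.val ∨ (j.val + 1) % (4 * N) = i.val ∨
        (i.val + 2 * N) % (4 * N) = j.val
    IsGreatest
      {s : ℝ | ∃ X : Matrix (Fin 1 ⊕ Fin (4 * N)) (Fin 1 ⊕ Fin (4 * N)) ℝ,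
        X.PosSemidef ∧
        X (Sum.inl 0) (Sum.inl 0) = 1 ∧
        (∀ i, X (Sum.inr i) (Sum.inr i) = X (Sum.inl 0) (Sum.inr i)) ∧
        (∀ i j, Adj i j → X (Sum.inr i) (Sum.inr j) = 0) ∧
        s = ∑ i, X (Sum.inr i) (Sum.inr i)}
      ((N : ℝ) * (1 + Real.cos (Real.pi / (2 * N)))) := by
  intro Adj
  have hN : 0 < N := by omega
  have hθ : 0 < (N : ℝ) * (1 + MobiusLadder.cosStep N) := by
    have := MobiusLadder.cosStep_nonneg hN
    positivity
  refine ⟨⟨MobiusLadder.primal N, MobiusLadder.posSemidef_primal hN,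
    by simp [MobiusLadder.primal], fun i => ?_, fun i j => MobiusLadder.primal_eq_zero_of_adj hN,
    MobiusLadder.sum_primal_inr_self.symm⟩, ?_⟩
  · rw [MobiusLadder.primal_inr_self, MobiusLadder.primal_inl_inr]
  rintro s ⟨X, hX, h00, hdiag, hadj, rfl⟩
  refine sum_diag_le_of_dual_certificate hX h00 hdiag hθ (MobiusLadder.posSemidef_dual_sub hN)
    (fun i => ?_) fun i j hij => ?_
  · rw [MobiusLadder.dual_apply_of_not_adj hN (MobiusLadder.not_adj_self hN i), if_pos rfl]
  by_cases h : Adj i j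
  · rw [hadj i j h, mul_zero]
  · rw [MobiusLadder.dual_apply_of_not_adj hN h, if_neg hij, zero_mul]
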